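/- For symmetric positive definite Σ₀, Σ₁ ∈ ℝⁿˣⁿ, the maximum of Tr(C) over all matrices C such that the block matrix [[Σ₀, C],[Cᵀ, Σ₁]] is positive semi-definite equals Tr((Σ₁^{1/2} Σ₀ Σ₁^{1/2})^{1/2}). -/

import Mathlib

open Matrix

section

open scoped ComplexOrder

noncomputable def Matrix.PosSemidef.sqrt {n : Type*} [Fintype n] [DecidableEq n] {𝕜 : Type*}
    [RCLike 𝕜] {A : Matrix n n 𝕜} (hA : A.PosSemidef) : Matrix n n 𝕜 :=
  hA.1.eigenvectorUnitary.1 * diagonal ((↑) ∘ (√·) ∘ hA.1.eigenvalues) *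
  (star hA.1.eigenvectorUnitary : Matrix n n 𝕜)

end

/-!
With `S = Σ₁^{1/2}` and `T = (S Σ₀ S)^{1/2}`, put `R = S T⁻¹ S`, so that `R Σ₀ R = Σ₁` and
`Tr (R Σ₀) = Tr (R⁻¹ Σ₁) = Tr T`. The cross covariance `C = Σ₀ R` is admissible because the Schur
complement `Σ₁ - R Σ₀ R` vanishes, and it has trace `Tr T`. Conversely, for any positive definite
`R` the block matrix `[[R, -1], [-1, R⁻¹]]` is positive semidefinite (again its Schur complement
vanishes), and the trace of its product with an admissible `[[Σ₀, C], [Cᵀ, Σ₁]]` is nonnegative: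
`2 Tr C ≤ Tr (R Σ₀) + Tr (R⁻¹ Σ₁) = 2 Tr T`.
-/

namespace Matrix

variable {m : Type*} [Fintype m]

theorem trace_fromBlocks {n α : Type*} [Fintype n] [AddCommMonoid α] (A : Matrix m m α)
    (B : Matrix m n α) (C : Matrix n m α) (D : Matrix n n α) :
    (fromBlocks A B C D).trace = A.trace + D.trace := by
  simp [trace, Fintype.sum_sum_type]

section CommRing

variable [DecidableEq m] {α : Type*} [CommRing α]

theorem isUnit_det_of_isUnit_det_mul_self {M : Matrix m m α} (h : IsUnit (M * M).det) :
    IsUnit M.det :=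
  (IsUnit.mul_iff.mp (det_mul M M ▸ h)).1

variable {A S T : Matrix m m α}

theorem mul_mul_eq_of_mul_self_eq (hT : IsUnit T.det) (hTT : T * T = S * A * S) :
    S * T⁻¹ * S * A * (S * T⁻¹ * S) = S * S := by
  calc S * T⁻¹ * S * A * (S * T⁻¹ * S) = S * T⁻¹ * (S * A * S * T⁻¹) * S := by
        simp only [mul_assoc]
    _ = S * S := by
        rw [← hTT, mul_nonsing_inv_cancel_right _ _ hT, nonsing_inv_mul_cancel_right _ _ hT]

theorem trace_mul_eq_of_mul_self_eq (hT : IsUnit T.det) (hTT : T * T = S * A * S) :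
    (S * T⁻¹ * S * A).trace = T.trace := by
  rw [mul_assoc, trace_mul_cycle, ← hTT, mul_nonsing_inv_cancel_right _ _ hT]

theorem trace_inv_mul_mul_self (hS : IsUnit S.det) (hT : IsUnit T.det) :
    ((S * T⁻¹ * S)⁻¹ * (S * S)).trace = T.trace := by
  rw [mul_inv_rev, mul_inv_rev, nonsing_inv_nonsing_inv _ hT, mul_assoc, mul_assoc T,
    nonsing_inv_mul_cancel_left _ _ hS, trace_mul_comm, mul_nonsing_inv_cancel_right _ _ hS]

end CommRing

section RCLike

open scoped ComplexOrder

variable [DecidableEq m] {𝕜 : Type*} [RCLike 𝕜]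

namespace PosSemidef

theorem posSemidef_sqrt {A : Matrix m m 𝕜} (hA : A.PosSemidef) : hA.sqrt.PosSemidef := by
  refine PosSemidef.mul_mul_conjTranspose_same (posSemidef_diagonal_iff.mpr fun i ↦ ?_) _
  exact RCLike.ofReal_nonneg.mpr (Real.sqrt_nonneg _)

theorem sqrt_mul_self {A : Matrix m m 𝕜} (hA : A.PosSemidef) : hA.sqrt * hA.sqrt = A := by
  let U : Matrix m m 𝕜 := hA.1.eigenvectorUnitary
  let E := diagonal ((↑) ∘ Real.sqrt ∘ hA.1.eigenvalues : m → 𝕜)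
  suffices U * (E * (star U * U) * E) * star U = A by
    simpa only [PosSemidef.sqrt, ← mul_assoc] using this
  have hEE : E * E = diagonal ((↑) ∘ hA.1.eigenvalues) := by
    rw [diagonal_mul_diagonal]
    congr! with i
    simp [← pow_two, ← RCLike.ofReal_pow, Real.sq_sqrt (hA.eigenvalues_nonneg i)]
  have hs := hA.1.spectral_theorem
  rw [Unitary.conjStarAlgAut_apply] at hs
  simpa [U, hEE, mul_assoc] using hs.symm

theorem trace_mul_nonneg {A B : Matrix m m 𝕜} (hA : A.PosSemidef) (hB : B.PosSemidef) :
    0 ≤ (A * B).trace := by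
  set S := hA.sqrt
  have hS : Sᴴ = S := hA.posSemidef_sqrt.isHermitian.eq
  calc (0 : 𝕜) ≤ (S * B * Sᴴ).trace := (hB.mul_mul_conjTranspose_same S).trace_nonneg
    _ = (A * B).trace := by rw [hS, trace_mul_cycle, ← hA.sqrt_mul_self]

end PosSemidef

theorem PosDef.posSemidef_fromBlocks_neg_one_inv {R : Matrix m m 𝕜} (hR : R.PosDef) :
    (fromBlocks R (-1) (-1) R⁻¹).PosSemidef := by
  have := hR.isUnit.invertible
  simpa using (PosDef.fromBlocks₁₁ (-1) R⁻¹ hR).mpr (by simpa using PosSemidef.zero)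

theorem PosDef.posSemidef_fromBlocks_mul {A : Matrix m m 𝕜} (hA : A.PosDef)
    (R : Matrix m m 𝕜) : (fromBlocks A (A * R) (A * R)ᴴ (Rᴴ * A * R)).PosSemidef := by
  have := hA.isUnit.invertible
  refine (PosDef.fromBlocks₁₁ (A * R) _ hA).mpr ?_
  rw [conjTranspose_mul, hA.isHermitian.eq, mul_assoc Rᴴ A, mul_inv_cancel_right_of_invertible,
    sub_self]
  exact .zero

end RCLike

theorem two_mul_trace_le_of_posSemidef_fromBlocks [DecidableEq m] {A B C R : Matrix m m ℝ}
    (hM : (fromBlocks A C Cᵀ B).PosSemidef) (hR : R.PosDef) :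
    2 * C.trace ≤ (R * A).trace + (R⁻¹ * B).trace := by
  have := hR.posSemidef_fromBlocks_neg_one_inv.trace_mul_nonneg hM
  rw [fromBlocks_multiply, trace_fromBlocks] at this
  simp only [trace_add, neg_mul, one_mul, trace_neg, trace_transpose] at this
  linarith

end Matrix

/-- For symmetric positive definite `Σ₀, Σ₁`, the maximum of `Tr C` over matrices `C` making the
block matrix `[[Σ₀, C], [Cᵀ, Σ₁]]` positive semi-definite equals
`Tr((Σ₁^{1/2} Σ₀ Σ₁^{1/2})^{1/2})`. -/
theorem max_trace_cross_covariance (n : ℕ)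
    (S0 S1 : Matrix (Fin n) (Fin n) ℝ) (h0 : S0.PosDef) (h1 : S1.PosDef)
    (hM : (h1.posSemidef.sqrt * S0 * h1.posSemidef.sqrt).PosSemidef) :
    IsGreatest {t : ℝ | ∃ C : Matrix (Fin n) (Fin n) ℝ,
        (Matrix.fromBlocks S0 C Cᵀ S1).PosSemidef ∧ t = C.trace}
      hM.sqrt.trace := by
  set S := h1.posSemidef.sqrt
  set T := hM.sqrt
  have hSS : S * S = S1 := h1.posSemidef.sqrt_mul_self
  have hTT : T * T = S * S0 * S := hM.sqrt_mul_self
  have hS : IsUnit S.det := isUnit_det_of_isUnit_det_mul_self (hSS ▸ h1.isUnit.map detMonoidHom)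
  have hT : IsUnit T.det := by
    refine isUnit_det_of_isUnit_det_mul_self ?_
    rw [hTT, det_mul, det_mul]
    exact (hS.mul (h0.isUnit.map detMonoidHom)).mul hS
  have hR : (S * T⁻¹ * S).PosDef := by
    have hTinv : T⁻¹.PosDef :=
      (hM.posSemidef_sqrt.posDef_iff_isUnit.mpr ((isUnit_iff_isUnit_det T).mpr hT)).inv
    have := ((isUnit_iff_isUnit_det S).mpr hS).posDef_star_right_conjugate_iff.mpr hTinv
    rwa [star_eq_conjTranspose, h1.posSemidef.posSemidef_sqrt.isHermitian.eq] at this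
  refine ⟨⟨S0 * (S * T⁻¹ * S), ?_, ?_⟩, ?_⟩
  · have := h0.posSemidef_fromBlocks_mul (S * T⁻¹ * S)
    rwa [hR.isHermitian.eq, mul_mul_eq_of_mul_self_eq hT hTT, hSS,
      conjTranspose_eq_transpose_of_trivial] at this
  · rw [trace_mul_comm, trace_mul_eq_of_mul_self_eq hT hTT]
  · rintro t ⟨C, hC, rfl⟩
    have := two_mul_trace_le_of_posSemidef_fromBlocks hC hR
    rw [trace_mul_eq_of_mul_self_eq hT hTT, ← hSS, trace_inv_mul_mul_self hS hT] at this
    linarith
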